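/- Let G be a group generated by a set S, and for d ≥ 1 let B_d denote the closed ball of radius d about the identity in the word metric on G determined by S (i.e., the set of elements expressible as products of at most d elements of S ∪ S⁻¹). Let H ≤ G be a subgroup such that B_d ⊆ g₁H ∪ … ∪ g_dH for some elements g₁,…,g_d ∈ G. Then H has index at most d in G. -/

import Mathlib

open Set

universe u

variable {M : Type*}

/-- The axioms of a median algebra for a ternary operation `med`. -/
def IsMedianAlgebra (med : M → M → M → M) : Prop :=
  (∀ x y : M, med x x y = x) ∧
  (∀ x y z : M, med x y z = med y x z) ∧
  (∀ x y z : M, med x y z = med x z y) ∧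
  (∀ x y z w : M, med (med x y z) y w = med x y (med z y w))

/-- A subset `C` is convex if it contains `med x y z` whenever `x, y ∈ C`. -/
def MConvex (med : M → M → M → M) (C : Set M) : Prop :=
  ∀ x ∈ C, ∀ y ∈ C, ∀ z : M, med x y z ∈ C

/-- A halfspace: a nonempty convex set with nonempty convex complement. -/
def IsHalfspace (med : M → M → M → M) (h : Set M) : Prop :=
  h.Nonempty ∧ hᶜ.Nonempty ∧ MConvex med h ∧ MConvex med hᶜ

/-- Two halfspaces are transverse if all four corner intersections are nonempty. -/
def TransverseHS (h k : Set M) : Prop :=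
  (h ∩ k).Nonempty ∧ (h ∩ kᶜ).Nonempty ∧ (hᶜ ∩ k).Nonempty ∧ (hᶜ ∩ kᶜ).Nonempty

/-- Two halfspaces are facing if `hᶜ ∩ kᶜ = ∅` and `h ≠ kᶜ`. -/
def FacingHS (h k : Set M) : Prop := hᶜ ∩ kᶜ = ∅ ∧ h ≠ kᶜ

/-- The coordinatewise majority median on the `k`-cube `{0,1}^k`. -/
def cubeMed (k : ℕ) (x y z : Fin k → Bool) : Fin k → Bool :=
  fun i => (x i && y i) || (x i && z i) || (y i && z i)

/-- `M` contains a median subalgebra isomorphic to the `k`-cube. -/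
def CubeEmbeds (med : M → M → M → M) (k : ℕ) : Prop :=
  ∃ φ : (Fin k → Bool) → M, Function.Injective φ ∧
    ∀ x y z : Fin k → Bool, φ (cubeMed k x y z) = med (φ x) (φ y) (φ z)

/-- The rank of `(M, med)` is at most `r`. -/
def RankLE (med : M → M → M → M) (r : ℕ) : Prop :=
  ∀ k : ℕ, CubeEmbeds med k → k ≤ r

/-- `(M, med)` has finite rank. -/
def FiniteRank (med : M → M → M → M) : Prop := ∃ r : ℕ, RankLE med r

/-- A wall is an unordered pair `{h, hᶜ}` where `h` is a halfspace. -/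
def IsWall (med : M → M → M → M) (w : Set (Set M)) : Prop :=
  ∃ h : Set M, IsHalfspace med h ∧ w = {h, hᶜ}

/-- Two walls are transverse if they bound transverse halfspaces. -/
def TransverseWalls (w₁ w₂ : Set (Set M)) : Prop :=
  ∃ h ∈ w₁, ∃ k ∈ w₂, TransverseHS h k

/-- The set of walls separating `x` from `y`. -/
def WallsSep (med : M → M → M → M) (x y : M) : Set (Set (Set M)) :=
  {w | IsWall med w ∧ ∃ h ∈ w, x ∈ h ∧ y ∉ h}

/-- The interval between `x` and `y`. -/
def mInterval (med : M → M → M → M) (x y : M) : Set M := {z | med x y z = z}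

/-- A permutation of `M` is a median automorphism if it preserves `med`. -/
def IsMedianAuto (med : M → M → M → M) (f : Equiv.Perm M) : Prop :=
  ∀ x y z : M, f (med x y z) = med (f x) (f y) (f z)

/-- The minimal set of a median automorphism `f`: points `x` for which the wall
sets `W(fⁿ x | fⁿ⁺¹ x)`, `n ∈ ℤ`, are pairwise disjoint. -/
def MinSet (med : M → M → M → M) (f : Equiv.Perm M) : Set M :=
  {x | ∀ m n : ℤ, m ≠ n →
    Disjoint (WallsSep med ((f ^ m) x) ((f ^ (m + 1)) x))
             (WallsSep med ((f ^ n) x) ((f ^ (n + 1)) x))}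

/-- The cyclic group generated by `f` acts without wall inversions. -/
def NoWallInversionsZ (med : M → M → M → M) (f : Equiv.Perm M) : Prop :=
  ∀ (n : ℤ) (h : Set M), IsHalfspace med h → ⇑(f ^ n) '' h ≠ hᶜ

/-- `f` acts non-transversely: no wall `w` is transverse to `f w`. -/
def NonTransverseAuto (med : M → M → M → M) (f : Equiv.Perm M) : Prop :=
  ∀ w : Set (Set M), IsWall med w → ¬ TransverseWalls ((fun s => ⇑f '' s) '' w) w

/-- The set `H₁(⟨f⟩)` of halfspaces `h` with `fⁿ h ⊊ h` for some `n ∈ ℤ`. -/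
def H1Z (med : M → M → M → M) (f : Equiv.Perm M) : Set (Set M) :=
  {h | IsHalfspace med h ∧ ∃ n : ℤ, ⇑(f ^ n) '' h ⊂ h}

/-- The set `H̄_{1/2}(⟨f⟩)`: halfspaces not in `H₁` admitting a facing translate. -/
def HbarHalfZ (med : M → M → M → M) (f : Equiv.Perm M) : Set (Set M) :=
  {h | IsHalfspace med h ∧ (¬ ∃ n : ℤ, ⇑(f ^ n) '' h ⊂ h) ∧
    ∃ n : ℤ, FacingHS (⇑(f ^ n) '' h) h}

/-- The reduced core `C̄(f)` of the action of `⟨f⟩`. -/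
def reducedCoreZ (med : M → M → M → M) (f : Equiv.Perm M) : Set M :=
  ⋂₀ HbarHalfZ med f

/-- The set `H⁺`: halfspaces `h` with `fⁿ h ⊊ h` for some `n ≥ 1`. -/
def HplusZ (med : M → M → M → M) (f : Equiv.Perm M) : Set (Set M) :=
  {h | IsHalfspace med h ∧ ∃ n : ℤ, 0 < n ∧ ⇑(f ^ n) '' h ⊂ h}

/-- The set `H⁻`: halfspaces `h` with `h ⊊ fⁿ h` for some `n ≥ 1`. -/
def HminusZ (med : M → M → M → M) (f : Equiv.Perm M) : Set (Set M) :=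
  {h | IsHalfspace med h ∧ ∃ n : ℤ, 0 < n ∧ h ⊂ ⇑(f ^ n) '' h}

/-- A group action on `M` by median automorphisms. -/
def MedianAction (G : Type*) [Group G] [MulAction G M]
    (med : M → M → M → M) : Prop :=
  ∀ (g : G) (x y z : M), g • med x y z = med (g • x) (g • y) (g • z)

/-- The action of `G` has no wall inversions. -/
def NoWallInversions (G : Type*) [Group G] [MulAction G M]
    (med : M → M → M → M) : Prop :=
  ∀ (g : G) (h : Set M), IsHalfspace med h → (fun x : M => g • x) '' h ≠ hᶜ

/-- The `G`-orbit of the set `h` is finite. -/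
def FiniteOrbitHS (G : Type*) [Group G] [MulAction G M] (h : Set M) : Prop :=
  {s : Set M | ∃ g : G, s = (fun x : M => g • x) '' h}.Finite

/-- The set `H₁(G)` of halfspaces `h` with `g h ⊊ h` for some `g ∈ G`. -/
def H1G (G : Type*) [Group G] [MulAction G M] (med : M → M → M → M) :
    Set (Set M) :=
  {h | IsHalfspace med h ∧ ∃ g : G, (fun x : M => g • x) '' h ⊂ h}

/-- The set `H_{1/2}(G)`: halfspaces with infinite orbit all of whose translates
are facing, transverse or equal to them. -/
def HhalfG (G : Type*) [Group G] [MulAction G M] (med : M → M → M → M) :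
    Set (Set M) :=
  {h | IsHalfspace med h ∧ ¬ FiniteOrbitHS G h ∧
    ∀ g : G, FacingHS ((fun x : M => g • x) '' h) h ∨
      TransverseHS ((fun x : M => g • x) '' h) h ∨ (fun x : M => g • x) '' h = h}

/-- The set `H̄_{1/2}(G)`: halfspaces not in `H₁(G)` admitting a facing translate. -/
def HbarHalfG (G : Type*) [Group G] [MulAction G M] (med : M → M → M → M) :
    Set (Set M) :=
  {h | IsHalfspace med h ∧ (¬ ∃ g : G, (fun x : M => g • x) '' h ⊂ h) ∧
    ∃ g : G, FacingHS ((fun x : M => g • x) '' h) h}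

/-- The convex core `C(G)`: intersection of all halfspaces in `H_{1/2}(G)`. -/
def coreG (G : Type*) [Group G] [MulAction G M] (med : M → M → M → M) : Set M :=
  ⋂₀ HhalfG G med

/-- The reduced convex core `C̄(G)`. -/
def reducedCoreG (G : Type*) [Group G] [MulAction G M]
    (med : M → M → M → M) : Set M :=
  ⋂₀ HbarHalfG G med

/-- The action is essential: every halfspace is strictly shrunk by some `g`. -/
def EssentialAction (G : Type*) [Group G] [MulAction G M]
    (med : M → M → M → M) : Prop :=
  ∀ h : Set M, IsHalfspace med h → ∃ g : G, (fun x : M => g • x) '' h ⊂ h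

/-- The action is minimal: no `G`-invariant convex subset other than `∅` and `M`. -/
def MinimalAction (G : Type*) [Group G] [MulAction G M]
    (med : M → M → M → M) : Prop :=
  ∀ C : Set M, MConvex med C → (∀ g : G, (fun x : M => g • x) '' C = C) →
    C = ∅ ∨ C = Set.univ

/-- A compatible pseudo-metric on the median algebra `(M, med)`. -/
def IsCompatPseudoMetric (med : M → M → M → M) (η : M → M → ℝ) : Prop :=
  (∀ x : M, η x x = 0) ∧ (∀ x y : M, η x y = η y x) ∧
  (∀ x y z : M, η x z ≤ η x y + η y z) ∧ (∀ x y : M, 0 ≤ η x y) ∧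
  (∀ x y z : M, η x y = η x (med x y z) + η (med x y z) y)

/-- A compatible metric on the median algebra `(M, med)`. -/
def IsCompatMetric (med : M → M → M → M) (η : M → M → ℝ) : Prop :=
  IsCompatPseudoMetric med η ∧ ∀ x y : M, η x y = 0 → x = y

/-- The translation length of `f` with respect to `η`. -/
noncomputable def transLen (f : Equiv.Perm M) (η : M → M → ℝ) : ℝ :=
  ⨅ x : M, η x (f x)

/-- An ultrafilter of halfspaces. -/
def IsUltrafilterHS (med : M → M → M → M) (σ : Set (Set M)) : Prop :=
  (∀ h ∈ σ, IsHalfspace med h) ∧ (∀ h ∈ σ, ∀ k ∈ σ, (h ∩ k).Nonempty) ∧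
  ∀ h : Set M, IsHalfspace med h → (h ∈ σ ↔ hᶜ ∉ σ)

/-- A median (metric) space: unique median points. -/
def IsMedianSpace (X : Type*) [MetricSpace X] : Prop :=
  ∀ x y z : X, ∃! m : X,
    dist x y = dist x m + dist m y ∧ dist x z = dist x m + dist m z ∧
    dist y z = dist y m + dist m z

/-- `med` is the median operation of the median space `X`. -/
def IsMedianMap (X : Type*) [MetricSpace X] (med : X → X → X → X) : Prop :=
  ∀ x y z : X,
    dist x y = dist x (med x y z) + dist (med x y z) y ∧
    dist x z = dist x (med x y z) + dist (med x y z) z ∧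
    dist y z = dist y (med x y z) + dist (med x y z) z

/-- A geodesic metric space. -/
def IsGeodesicSpace (X : Type*) [MetricSpace X] : Prop :=
  ∀ x y : X, ∃ γ : ℝ → X, γ 0 = x ∧ γ (dist x y) = y ∧
    ∀ s ∈ Set.Icc (0:ℝ) (dist x y), ∀ t ∈ Set.Icc (0:ℝ) (dist x y),
      dist (γ s) (γ t) = |s - t|

/-- The ball of radius `d` about the identity in the word metric given by `S`. -/
def wordBall {G : Type*} [Group G] (S : Set G) (d : ℕ) : Set G :=
  {g | ∃ l : List G, l.length ≤ d ∧ (∀ x ∈ l, x ∈ S ∨ x⁻¹ ∈ S) ∧ l.prod = g}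

/-! The cosets `B_n H` met by the balls form an increasing chain of subsets of `G ⧸ H` that starts
with one coset and, by hypothesis, has at most `d` cosets at radius `d`. So the chain stops
growing at some radius `n < d`. Since `B_{n+1} = (S ∪ S⁻¹) B_n ∪ B_n`, a chain that stalls once is
invariant under the generators, hence under `G`, so `B_n H` is already all of `G ⧸ H`, and all of
these cosets lie among `g₁H, …, g_dH`. -/

section WordBall

variable {G : Type*} [Group G] {S : Set G}

theorem wordBall_mono (S : Set G) : Monotone (wordBall S) := by
  rintro m n hmn x ⟨l, hl, hS, rfl⟩
  exact ⟨l, hl.trans hmn, hS, rfl⟩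

theorem one_mem_wordBall (S : Set G) (n : ℕ) : (1 : G) ∈ wordBall S n :=
  ⟨[], Nat.zero_le n, by simp, List.prod_nil⟩

theorem mul_mem_wordBall_succ {n : ℕ} {s x : G} (hs : s ∈ S ∨ s⁻¹ ∈ S)
    (hx : x ∈ wordBall S n) : s * x ∈ wordBall S (n + 1) := by
  obtain ⟨l, hl, hS, rfl⟩ := hx
  refine ⟨s :: l, Nat.succ_le_succ hl, ?_, List.prod_cons⟩
  simpa [List.forall_mem_cons] using And.intro hs hS

theorem mem_wordBall_succ {n : ℕ} {x : G} (hx : x ∈ wordBall S (n + 1)) :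
    x ∈ wordBall S n ∨ ∃ s, (s ∈ S ∨ s⁻¹ ∈ S) ∧ ∃ y ∈ wordBall S n, x = s * y := by
  obtain ⟨_ | ⟨s, l⟩, hl, hS, rfl⟩ := hx
  · exact Or.inl (one_mem_wordBall S n)
  · rw [List.forall_mem_cons] at hS
    exact Or.inr ⟨s, hS.1, l.prod, ⟨l, Nat.le_of_succ_le_succ hl, hS.2, rfl⟩, List.prod_cons⟩

theorem exists_mem_wordBall (hS : Subgroup.closure S = ⊤) (x : G) : ∃ n, x ∈ wordBall S n := by
  have hx : x ∈ (Subgroup.closure S).toSubmonoid := by simp [hS]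
  rw [Subgroup.closure_toSubmonoid] at hx
  obtain ⟨l, hl, rfl⟩ := Submonoid.exists_list_of_mem_closure hx
  exact ⟨l.length, l, le_rfl, fun y hy => by simpa using hl y hy, rfl⟩

theorem image_wordBall_eq_orbit_of_succ_subset {X : Type*} [MulAction G X]
    (hS : Subgroup.closure S = ⊤) (x : X) {n : ℕ}
    (hn : (· • x) '' wordBall S (n + 1) ⊆ (· • x) '' wordBall S n) :
    (· • x) '' wordBall S n = MulAction.orbit G x := by
  have hsub : ∀ m, (· • x) '' wordBall S m ⊆ (· • x) '' wordBall S n := by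
    intro m
    induction m with
    | zero => exact image_mono (wordBall_mono S (Nat.zero_le n))
    | succ m ih =>
      rintro _ ⟨a, ha, rfl⟩
      rcases mem_wordBall_succ ha with ha | ⟨s, hs, b, hb, rfl⟩
      · exact ih ⟨a, ha, rfl⟩
      · obtain ⟨c, hc, hcb⟩ := ih ⟨b, hb, rfl⟩
        refine hn ⟨s * c, mul_mem_wordBall_succ hs hc, ?_⟩
        simp only [mul_smul] at hcb ⊢
        rw [hcb]
  refine (image_subset_range _ _).antisymm fun _ ⟨a, ha⟩ => ?_
  obtain ⟨m, hm⟩ := exists_mem_wordBall hS a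
  exact hsub m ⟨a, hm, ha⟩

end WordBall

theorem exists_succ_subset_of_ncard_le {X : Type*} {P : ℕ → Set X} (hP : Monotone P)
    (h0 : (P 0).Nonempty) {d : ℕ} (hfin : (P d).Finite) (hcard : (P d).ncard ≤ d) :
    ∃ n < d, P (n + 1) ⊆ P n := by
  by_contra! hgrow
  have hlt : ∀ n ≤ d, n + 1 ≤ (P n).ncard := by
    intro n
    induction n with
    | zero => exact fun _ => (ncard_pos (hfin.subset (hP (Nat.zero_le d)))).2 h0
    | succ n ih =>
      intro hn
      have hss : P n ⊂ P (n + 1) := ⟨hP n.le_succ, hgrow n hn⟩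
      have := ncard_lt_ncard hss (hfin.subset (hP hn))
      have := (ih (n.le_succ.trans hn)).trans_lt this
      omega
  have := hlt d le_rfl
  omega

theorem index_le_of_ball_covered_general {G : Type*} [Group G] (S : Set G)
    (hS : Subgroup.closure S = ⊤) (d : ℕ) (H : Subgroup G)
    (g : Fin d → G)
    (hcov : wordBall S d ⊆ ⋃ i : Fin d, (fun x => g i * x) '' (H : Set G)) :
    H.index ≠ 0 ∧ H.index ≤ d := by
  let P : ℕ → Set (G ⧸ H) := fun n => (· • ((1 : G) : G ⧸ H)) '' wordBall S n
  have hPd : P d ⊆ range fun i => (g i : G ⧸ H) := by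
    rintro _ ⟨x, hx, rfl⟩
    obtain ⟨i, h, hh, rfl⟩ := mem_iUnion.1 (hcov hx)
    exact ⟨i, by simpa [QuotientGroup.eq] using hh⟩
  have hrange : (range fun i => (g i : G ⧸ H)).ncard ≤ d :=
    (Finite.card_range_le _).trans_eq (Nat.card_fin d)
  obtain ⟨n, hnd, hn⟩ := exists_succ_subset_of_ncard_le
    (fun _ _ h => image_mono (wordBall_mono S h)) ⟨_, 1, one_mem_wordBall S 0, rfl⟩
    ((finite_range _).subset hPd) ((ncard_le_ncard hPd (finite_range _)).trans hrange)
  have hsurj : Function.Surjective fun i => (g i : G ⧸ H) := fun q => by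
    refine hPd (image_mono (wordBall_mono S hnd.le) ?_)
    rw [image_wordBall_eq_orbit_of_succ_subset hS _ hn, MulAction.orbit_eq_univ]
    trivial
  have : Finite (G ⧸ H) := Finite.of_surjective _ hsurj
  exact ⟨Subgroup.index_ne_zero_of_finite,
    (Nat.card_le_card_of_surjective _ hsurj).trans_eq (Nat.card_fin d)⟩

/-- If the `d`-ball of a Cayley graph of `G` is covered by `d` left
cosets of `H`, then `H` has index at most `d` in `G`. -/
theorem index_le_of_ball_covered {G : Type*} [Group G] (S : Set G)
    (hS : Subgroup.closure S = ⊤) (d : ℕ) (hd : 1 ≤ d) (H : Subgroup G)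
    (g : Fin d → G)
    (hcov : wordBall S d ⊆ ⋃ i : Fin d, (fun x => g i * x) '' (H : Set G)) :
    H.index ≠ 0 ∧ H.index ≤ d :=
  index_le_of_ball_covered_general S hS d H g hcov
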